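/- arXiv:2302.01196 — 4 statements merged into one kernel-verified Lean document; each statement's English description precedes it below -/
import Mathlib

section
/- Let r : R^d → R be convex and positively homogeneous of degree 1, and B_i > 0 for all i. If x and z are both minimizers of r over the set F = {v ∈ R^d_{>0} : Σ_i B_i log v_i ≥ 0} with optimal value r* > 0, then x = z. In other words, the constrained minimizer is unique when it exists and has positive optimal value. -/
/-- Uniqueness of the minimizer of a convex positively homogeneous risk functional
over the log-budget constraint set, when the optimal value is positive. -/
theorem rb_portfolio_unique (d : ℕ) (r : (Fin d → ℝ) → ℝ)
    (hconv : ConvexOn ℝ Set.univ r)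
    (hhom : ∀ lam : ℝ, 0 ≤ lam → ∀ v : Fin d → ℝ, r (lam • v) = lam * r v)
    (B : Fin d → ℝ) (hB : ∀ i, 0 < B i)
    (F : Set (Fin d → ℝ))
    (hF : F = {v | (∀ i, 0 < v i) ∧ 0 ≤ ∑ i, B i * Real.log (v i)})
    (x z : Fin d → ℝ) (hx : x ∈ F) (hz : z ∈ F)
    (hxopt : ∀ v ∈ F, r x ≤ r v) (hzopt : ∀ v ∈ F, r z ≤ r v)
    (hpos : 0 < r x) : x = z := by
  by_contra hne
  subst hF
  obtain ⟨hxpos, hxlog⟩ := hx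
  obtain ⟨hzpos, hzlog⟩ := hz
  -- some coordinate differs
  obtain ⟨i0, hi0⟩ : ∃ i, x i ≠ z i := by
    by_contra h
    push_neg at h
    exact hne (funext h)
  have hrxz : r x = r z := le_antisymm (hxopt z ⟨hzpos, hzlog⟩) (hzopt x ⟨hxpos, hxlog⟩)
  set w : Fin d → ℝ := (1/2 : ℝ) • x + (1/2 : ℝ) • z with hw
  have hwpos : ∀ i, 0 < w i := by
    intro i
    have := hxpos i; have := hzpos i
    simp only [hw, Pi.add_apply, Pi.smul_apply, smul_eq_mul]
    linarith
  have hrw : r w ≤ r x := by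
    have := hconv.2 (Set.mem_univ x) (Set.mem_univ z) (by norm_num : (0:ℝ) ≤ 1/2)
      (by norm_num : (0:ℝ) ≤ 1/2) (by norm_num : (1/2 : ℝ) + 1/2 = 1)
    simp only [smul_eq_mul] at this
    linarith [this, hrxz]
  -- strict concavity of log gives strict feasibility of w
  have hlog_ge : ∀ i, (1/2) * Real.log (x i) + (1/2) * Real.log (z i) ≤ Real.log (w i) := by
    intro i
    have := strictConcaveOn_log_Ioi.concaveOn.2 (Set.mem_Ioi.mpr (hxpos i))
      (Set.mem_Ioi.mpr (hzpos i)) (by norm_num : (0:ℝ) ≤ 1/2)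
      (by norm_num : (0:ℝ) ≤ 1/2) (by norm_num : (1/2 : ℝ) + 1/2 = 1)
    simpa [hw, smul_eq_mul] using this
  have hlog_gt : (1/2) * Real.log (x i0) + (1/2) * Real.log (z i0) < Real.log (w i0) := by
    have := strictConcaveOn_log_Ioi.2 (Set.mem_Ioi.mpr (hxpos i0))
      (Set.mem_Ioi.mpr (hzpos i0)) hi0 (by norm_num : (0:ℝ) < 1/2)
      (by norm_num : (0:ℝ) < 1/2) (by norm_num : (1/2 : ℝ) + 1/2 = 1)
    simpa [hw, smul_eq_mul] using this
  have hS : 0 < ∑ i, B i * Real.log (w i) := by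
    have hlt : ∑ i, B i * ((1/2) * Real.log (x i) + (1/2) * Real.log (z i))
        < ∑ i, B i * Real.log (w i) := by
      apply Finset.sum_lt_sum
      · intro i _
        exact mul_le_mul_of_nonneg_left (hlog_ge i) (hB i).le
      · exact ⟨i0, Finset.mem_univ i0, by
          exact mul_lt_mul_of_pos_left hlog_gt (hB i0)⟩
    have hsplit : ∑ i, B i * ((1/2) * Real.log (x i) + (1/2) * Real.log (z i))
        = (1/2) * (∑ i, B i * Real.log (x i)) + (1/2) * (∑ i, B i * Real.log (z i)) := by
      rw [Finset.mul_sum, Finset.mul_sum, ← Finset.sum_add_distrib]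
      congr 1; funext i; ring
    rw [hsplit] at hlt
    nlinarith
  set S := ∑ i, B i * Real.log (w i) with hSdef
  have hTB : 0 < ∑ i, B i := Finset.sum_pos (fun i _ => hB i) ⟨i0, Finset.mem_univ i0⟩
  set c : ℝ := Real.exp (-(S / ∑ i, B i)) with hc
  have hc0 : 0 < c := Real.exp_pos _
  have hc1 : c < 1 := by
    rw [hc]
    apply Real.exp_lt_one_iff.mpr
    have : 0 < S / ∑ i, B i := div_pos hS hTB
    linarith
  have hlogc : Real.log c = -(S / ∑ i, B i) := Real.log_exp _
  have hcw_mem : (c • w) ∈ {v : Fin d → ℝ | (∀ i, 0 < v i) ∧ 0 ≤ ∑ i, B i * Real.log (v i)} := by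
    constructor
    · intro i
      exact mul_pos hc0 (hwpos i)
    · have : ∑ i, B i * Real.log (c * w i)
          = (∑ i, B i) * Real.log c + S := by
        rw [hSdef, Finset.sum_mul, ← Finset.sum_add_distrib]
        apply Finset.sum_congr rfl; intro i _
        rw [Real.log_mul (ne_of_gt hc0) (ne_of_gt (hwpos i))]
        ring
      have heq : ∑ i, B i * Real.log ((c • w) i) = 0 := by
        simp only [Pi.smul_apply, smul_eq_mul]
        rw [this, hlogc]
        field_simp
        ring
      rw [heq]
  have hcontra : r (c • w) < r x := by
    rw [hhom c hc0.le w]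
    calc c * r w ≤ c * r x := mul_le_mul_of_nonneg_left hrw hc0.le
      _ < 1 * r x := by apply mul_lt_mul_of_pos_right hc1 hpos
      _ = r x := one_mul _
  exact absurd (hxopt _ hcw_mem) (not_le.mpr hcontra)
end

section
/- For a real random variable Z with E|Z| < ∞ and α ∈ (0,1), the function t ↦ t + (1/(1-α)) E[(Z - t)_+] is convex on R, and its infimum over t ∈ R equals the Expected Shortfall ES_α(Z) = (1/(1-α)) ∫_α^1 F_Z^{-1}(u) du; moreover the infimum is attained at t = F_Z^{-1}(α) (the left α-quantile of Z). -/
/-!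
Under Lebesgue measure on `(0, 1)` the quantile function `q` of `Z` has the law of `Z`, so
`E[(Z - t)₊] = ∫₀¹ (q u - t)₊ du`. Bounding `(q u - t)₊` below by `1_{u > α} (q u - t)` gives
`E[(Z - t)₊] ≥ ∫_α^1 q - (1 - α) t`, i.e. `f t ≥ ES_α(Z)`, and for `t = q α` the monotonicity of `q`
makes the two integrands agree. Convexity of `f` holds pointwise in `ω` before integrating.
-/

open MeasureTheory ProbabilityTheory Filter Topology Set

section ConvexIntegral

variable {Ω E : Type*} [MeasurableSpace Ω] {μ : Measure Ω} [AddCommGroup E] [Module ℝ E]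

theorem convexOn_integral {s : Set E} {f : E → Ω → ℝ} (hs : Convex ℝ s)
    (hf : ∀ ω, ConvexOn ℝ s (f · ω)) (hint : ∀ x ∈ s, Integrable (f x) μ) :
    ConvexOn ℝ s fun x => ∫ ω, f x ω ∂μ := by
  refine ⟨hs, fun x hx y hy a b ha hb hab => ?_⟩
  have hxy := ((hint x hx).smul a).add ((hint y hy).smul b)
  calc ∫ ω, f (a • x + b • y) ω ∂μ ≤ ∫ ω, (a • f x ω + b • f y ω) ∂μ :=
        integral_mono (hint _ (hs hx hy ha hb hab)) hxy fun ω => (hf ω).2 hx hy ha hb hab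
    _ = a • ∫ ω, f x ω ∂μ + b • ∫ ω, f y ω ∂μ := by
        rw [integral_add (by exact (hint x hx).smul a) (by exact (hint y hy).smul b), integral_smul,
          integral_smul]

end ConvexIntegral

theorem convexOn_max_sub_zero (z : ℝ) : ConvexOn ℝ univ fun t : ℝ => max (z - t) 0 :=
  ((convexOn_const z convex_univ).sub (concaveOn_id convex_univ)).sup (convexOn_const 0 convex_univ)

section PositivePart

variable {Ω : Type*} [MeasurableSpace Ω] {μ : Measure Ω} [IsFiniteMeasure μ] {g : Ω → ℝ}
  {s : Set Ω} (t : ℝ)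

theorem integral_indicator_sub_const (hg : Integrable g μ) (hs : MeasurableSet s) :
    ∫ ω, s.indicator (fun ω => g ω - t) ω ∂μ = ∫ ω in s, g ω ∂μ - μ.real s * t := by
  rw [integral_indicator hs, integral_sub hg.integrableOn (integrable_const t), setIntegral_const,
    smul_eq_mul]

theorem setIntegral_sub_le_integral_max_sub_zero (hg : Integrable g μ) (hs : MeasurableSet s) :
    ∫ ω in s, g ω ∂μ - μ.real s * t ≤ ∫ ω, max (g ω - t) 0 ∂μ := by
  rw [← integral_indicator_sub_const t hg hs]
  refine integral_mono ((hg.sub (integrable_const t)).indicator hs)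
    (hg.sub (integrable_const t)).pos_part fun ω => ?_
  by_cases hω : ω ∈ s <;> simp [hω]

theorem integral_max_sub_zero_eq_setIntegral (hg : Integrable g μ) (hs : MeasurableSet s)
    (hge : ∀ᵐ ω ∂μ, ω ∈ s → t ≤ g ω) (hle : ∀ᵐ ω ∂μ, ω ∉ s → g ω ≤ t) :
    ∫ ω, max (g ω - t) 0 ∂μ = ∫ ω in s, g ω ∂μ - μ.real s * t := by
  rw [← integral_indicator_sub_const t hg hs]
  refine integral_congr_ae ?_
  filter_upwards [hge, hle] with ω hge hle
  by_cases hω : ω ∈ s <;> simp [hω, hge, hle]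

end PositivePart

/-- For `u ∉ (0, 1)` the set may be empty or unbounded below, and `sInf` then returns the junk
value `0`. -/
noncomputable def quantile (ν : Measure ℝ) (u : ℝ) : ℝ := sInf {y | u ≤ cdf ν y}

section Quantile

variable (ν : Measure ℝ) {u : ℝ}

theorem bddBelow_setOf_le_cdf (hu : 0 < u) : BddBelow {y | u ≤ cdf ν y} := by
  obtain ⟨y₀, hy₀⟩ := ((tendsto_cdf_atBot ν).eventually (eventually_lt_nhds hu)).exists
  exact ⟨y₀, fun y hy => le_of_not_gt fun hlt => (hy.trans ((cdf ν).mono hlt.le)).not_gt hy₀⟩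

theorem nonempty_setOf_le_cdf (hu : u < 1) : {y | u ≤ cdf ν y}.Nonempty := by
  obtain ⟨y, hy⟩ := ((tendsto_cdf_atTop ν).eventually (eventually_gt_nhds hu)).exists
  exact ⟨y, hy.le⟩

theorem quantile_le_iff (hu : u ∈ Ioo 0 1) {s : ℝ} : quantile ν u ≤ s ↔ u ≤ cdf ν s := by
  refine ⟨fun h => ?_, fun h => csInf_le (bddBelow_setOf_le_cdf ν hu.1) h⟩
  -- `{y | u ≤ cdf ν y}` is an up-set, and right continuity of `cdf ν` closes it at its infimum.
  have hright : ∀ᶠ y in 𝓝[>] quantile ν u, u ≤ cdf ν y :=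
    eventually_nhdsWithin_of_forall fun y hy => by
      obtain ⟨z, hz, hzy⟩ := exists_lt_of_csInf_lt (nonempty_setOf_le_cdf ν hu.2) hy
      exact hz.trans ((cdf ν).mono hzy.le)
  have hcont := ((cdf ν).right_continuous (quantile ν u)).mono_left
    (nhdsWithin_mono _ Ioi_subset_Ici_self)
  exact (ge_of_tendsto hcont hright).trans ((cdf ν).mono h)

theorem monotoneOn_quantile : MonotoneOn (quantile ν) (Ioo 0 1) := fun _ hu _ hv huv =>
  (quantile_le_iff ν hu).2 (huv.trans ((quantile_le_iff ν hv).1 le_rfl))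

theorem aemeasurable_quantile : AEMeasurable (quantile ν) (volume.restrict (Ioo 0 1)) :=
  aemeasurable_restrict_of_monotoneOn measurableSet_Ioo (monotoneOn_quantile ν)

theorem map_quantile_volume_restrict_Ioo [IsProbabilityMeasure ν] :
    (volume.restrict (Ioo 0 1)).map (quantile ν) = ν := by
  refine Measure.ext_of_Iic _ _ fun s => ?_
  rw [Measure.map_apply_of_aemeasurable (aemeasurable_quantile ν) measurableSet_Iic,
    Measure.restrict_apply' measurableSet_Ioo, ← ofReal_cdf]
  have hpre : quantile ν ⁻¹' Iic s ∩ Ioo 0 1 = {u ∈ Ioo 0 1 | u ≤ cdf ν s} := by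
    ext u
    exact ⟨fun h => ⟨h.2, (quantile_le_iff ν h.2).1 h.1⟩,
      fun h => ⟨(quantile_le_iff ν h.1).2 h.2, h.1⟩⟩
  rw [hpre]
  refine le_antisymm ?_ ?_
  · calc volume {u ∈ Ioo 0 1 | u ≤ cdf ν s} ≤ volume (Ioc 0 (cdf ν s)) :=
          measure_mono fun u hu => ⟨hu.1.1, hu.2⟩
      _ = _ := by rw [Real.volume_Ioc, sub_zero]
  · calc ENNReal.ofReal (cdf ν s) = volume (Ioo 0 (cdf ν s)) := by rw [Real.volume_Ioo, sub_zero]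
      _ ≤ volume {u ∈ Ioo 0 1 | u ≤ cdf ν s} :=
          measure_mono fun u hu => ⟨⟨hu.1, hu.2.trans_le (cdf_le_one ν s)⟩, hu.2.le⟩

theorem integral_comp_quantile [IsProbabilityMeasure ν] {g : ℝ → ℝ}
    (hg : AEStronglyMeasurable g ν) :
    ∫ u in Ioo 0 1, g (quantile ν u) = ∫ x, g x ∂ν := by
  rw [← integral_map (aemeasurable_quantile ν) (by rwa [map_quantile_volume_restrict_Ioo]),
    map_quantile_volume_restrict_Ioo]

theorem integrableOn_quantile [IsProbabilityMeasure ν] (hν : Integrable id ν) :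
    IntegrableOn (quantile ν) (Ioo 0 1) :=
  (integrable_map_measure aestronglyMeasurable_id (aemeasurable_quantile ν)).1
    (by rwa [map_quantile_volume_restrict_Ioo])

end Quantile

section RockafellarUryasev

variable {α : ℝ}

theorem setIntegral_Ioi_sub_measureReal_mul (hα : α ∈ Icc 0 1) (g : ℝ → ℝ) (t : ℝ) :
    ∫ u in Ioi α, g u ∂volume.restrict (Ioo 0 1) - (volume.restrict (Ioo 0 1)).real (Ioi α) * t
      = (∫ u in α..1, g u) - (1 - α) * t := by
  rw [Measure.restrict_restrict measurableSet_Ioi, measureReal_restrict_apply measurableSet_Ioi,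
    Ioi_inter_Ioo, max_eq_left hα.1, Real.volume_real_Ioo_of_le hα.2,
    intervalIntegral.integral_of_le hα.2, integral_Ioc_eq_integral_Ioo]

variable (ν : Measure ℝ) [IsProbabilityMeasure ν]

theorem intervalIntegral_quantile_sub_le (hν : Integrable id ν) (hα : α ∈ Ioo 0 1) (t : ℝ) :
    (∫ u in α..1, quantile ν u) - (1 - α) * t ≤ ∫ x, max (x - t) 0 ∂ν := by
  rw [← setIntegral_Ioi_sub_measureReal_mul (Ioo_subset_Icc_self hα),
    ← integral_comp_quantile ν (by fun_prop)]
  exact setIntegral_sub_le_integral_max_sub_zero t (integrableOn_quantile ν hν) measurableSet_Ioi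

theorem integral_max_sub_quantile_zero (hν : Integrable id ν) (hα : α ∈ Ioo 0 1) :
    ∫ x, max (x - quantile ν α) 0 ∂ν
      = (∫ u in α..1, quantile ν u) - (1 - α) * quantile ν α := by
  rw [← setIntegral_Ioi_sub_measureReal_mul (Ioo_subset_Icc_self hα),
    ← integral_comp_quantile ν (by fun_prop)]
  refine integral_max_sub_zero_eq_setIntegral _ (integrableOn_quantile ν hν) measurableSet_Ioi
    ?_ ?_
  · exact ae_restrict_of_forall_mem measurableSet_Ioo fun u hu hαu =>
      monotoneOn_quantile ν hα hu (le_of_lt hαu)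
  · exact ae_restrict_of_forall_mem measurableSet_Ioo fun u hu hαu =>
      monotoneOn_quantile ν hu hα (not_lt.1 hαu)

theorem inv_mul_intervalIntegral_quantile_le (hν : Integrable id ν) (hα : α ∈ Ioo 0 1) (t : ℝ) :
    (1 - α)⁻¹ * ∫ u in α..1, quantile ν u ≤ t + (1 - α)⁻¹ * ∫ x, max (x - t) 0 ∂ν := by
  have h1α : 0 < 1 - α := sub_pos.2 hα.2
  calc (1 - α)⁻¹ * ∫ u in α..1, quantile ν u
      = t + (1 - α)⁻¹ * ((∫ u in α..1, quantile ν u) - (1 - α) * t) := by field_simp; ring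
    _ ≤ t + (1 - α)⁻¹ * ∫ x, max (x - t) 0 ∂ν := by
      gcongr
      exact intervalIntegral_quantile_sub_le ν hν hα t

theorem quantile_add_inv_mul_integral_max_sub (hν : Integrable id ν) (hα : α ∈ Ioo 0 1) :
    quantile ν α + (1 - α)⁻¹ * ∫ x, max (x - quantile ν α) 0 ∂ν
      = (1 - α)⁻¹ * ∫ u in α..1, quantile ν u := by
  have h1α : 0 < 1 - α := sub_pos.2 hα.2
  rw [integral_max_sub_quantile_zero ν hν hα]
  field_simp
  ring

end RockafellarUryasev

/-- Rockafellar–Uryasev representation of Expected Shortfall: the function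
`t ↦ t + (1-α)⁻¹ E[(Z-t)₊]` is convex, its infimum over `t` is
`ES_α(Z) = (1-α)⁻¹ ∫_α^1 F_Z⁻¹(u) du`, and the infimum is attained at the
left `α`-quantile. -/
theorem es_rockafellar_uryasev {Ω : Type*} [MeasurableSpace Ω]
    (μ : Measure Ω) [IsProbabilityMeasure μ]
    (Z : Ω → ℝ) (hZ : Integrable Z μ) (α : ℝ) (hα : α ∈ Set.Ioo (0:ℝ) 1) :
    letI q : ℝ → ℝ := fun u => sInf {y : ℝ | u ≤ (μ {ω | Z ω ≤ y}).toReal}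
    letI f : ℝ → ℝ := fun t => t + (1 - α)⁻¹ * ∫ ω, max (Z ω - t) 0 ∂μ
    ConvexOn ℝ Set.univ f ∧
      (⨅ t : ℝ, f t) = (1 - α)⁻¹ * ∫ u in α..1, q u ∧
      f (q α) = (1 - α)⁻¹ * ∫ u in α..1, q u := by
  set q : ℝ → ℝ := fun u => sInf {y : ℝ | u ≤ (μ {ω | Z ω ≤ y}).toReal}
  set f : ℝ → ℝ := fun t => t + (1 - α)⁻¹ * ∫ ω, max (Z ω - t) 0 ∂μ
  have : IsProbabilityMeasure (μ.map Z) := Measure.isProbabilityMeasure_map hZ.aemeasurable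
  have hq : q = quantile (μ.map Z) := funext fun u => by
    simp only [q, quantile, cdf_eq_real,
      map_measureReal_apply_of_aemeasurable hZ.aemeasurable measurableSet_Iic]
    rfl
  have hν : Integrable id (μ.map Z) :=
    (integrable_map_measure aestronglyMeasurable_id hZ.aemeasurable).2 hZ
  have hf : ∀ t, f t = t + (1 - α)⁻¹ * ∫ x, max (x - t) 0 ∂μ.map Z := fun t => by
    rw [integral_map (f := fun x => max (x - t) 0) hZ.aemeasurable (by fun_prop)]
  have hconv : ConvexOn ℝ univ f := (convexOn_id convex_univ).add <|
    (convexOn_integral convex_univ (fun ω => convexOn_max_sub_zero (Z ω))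
      fun t _ => (hZ.sub (integrable_const t)).pos_part).smul (inv_nonneg.2 (sub_pos.2 hα.2).le)
  have hlow : ∀ t, (1 - α)⁻¹ * ∫ u in α..1, q u ≤ f t := fun t => by
    rw [hf, hq]
    exact inv_mul_intervalIntegral_quantile_le _ hν hα t
  have hattain : f (q α) = (1 - α)⁻¹ * ∫ u in α..1, q u := by
    rw [hf, hq]
    exact quantile_add_inv_mul_integral_max_sub _ hν hα
  refine ⟨hconv, le_antisymm ?_ (le_ciInf hlow), hattain⟩
  exact (ciInf_le ⟨_, forall_mem_range.2 hlow⟩ (q α)).trans hattain.le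
end

section
/- For an essentially bounded random variable L, EVaR_α(L) = inf_{t>0} t log(E[e^{L/t}]/(1-α)) converges to the essential supremum of L as α → 1⁻. -/
/-!
Write `M = ess sup L` and `φ(t) = t log (E[e^{L/t}] / (1 - α))`, so that `EVaR_α(L) = inf_{t>0} φ(t)`.
Since `L ≤ M` a.s., `φ(t) ≤ M + t log (1/(1-α))`, and letting `t → 0` gives `EVaR_α(L) ≤ M`.
Conversely, for `ε > 0` the event `{L ≥ M - ε}` has positive probability `q`, and Markov's
inequality gives `E[e^{L/t}] ≥ q e^{(M-ε)/t}`; hence `φ(t) ≥ M - ε` for all `t > 0` once `1 - α ≤ q`.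
-/

open MeasureTheory Filter Real Topology

noncomputable def evarObjective {Ω : Type*} [MeasurableSpace Ω] (μ : Measure Ω) (L : Ω → ℝ)
    (α t : ℝ) : ℝ :=
  t * log ((∫ ω, exp (L ω / t) ∂μ) / (1 - α))

noncomputable def evar {Ω : Type*} [MeasurableSpace Ω] (μ : Measure Ω) (L : Ω → ℝ) (α : ℝ) : ℝ :=
  ⨅ t : Set.Ioi (0 : ℝ), evarObjective μ L α t

section

variable {Ω : Type*} [MeasurableSpace Ω] {μ : Measure Ω} {L : Ω → ℝ} {a b α t : ℝ}

theorem MeasureTheory.MemLp.exists_ae_abs_le (hL : MemLp L ⊤ μ) : ∃ C, ∀ᵐ ω ∂μ, |L ω| ≤ C := by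
  have hfin := hL.eLpNorm_lt_top
  rw [eLpNorm_exponent_top, eLpNormEssSup_lt_top_iff_isBoundedUnder] at hfin
  obtain ⟨C, hC⟩ := hfin
  exact ⟨C, (eventually_map.1 hC).mono fun ω hω => by
    simpa [← Real.norm_eq_abs, ← coe_nnnorm] using hω⟩

theorem MeasureTheory.MemLp.integrable_exp_div [IsFiniteMeasure μ] (hL : MemLp L ⊤ μ) (t : ℝ) :
    Integrable (fun ω => exp (L ω / t)) μ := by
  obtain ⟨C, hC⟩ := hL.exists_ae_abs_le
  have hmeas := (hL.aestronglyMeasurable.aemeasurable.div_const t).exp.aestronglyMeasurable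
  refine .of_bound hmeas (exp (C / |t|)) (hC.mono fun ω hω => ?_)
  rw [norm_of_nonneg (exp_pos _).le, exp_le_exp]
  exact (le_abs_self _).trans (by rw [abs_div]; gcongr)

theorem measureReal_setOf_le_pos_of_lt_essSup [IsFiniteMeasure μ] [NeZero μ]
    (hL : IsBoundedUnder (· ≥ ·) (ae μ) L) (ha : a < essSup L μ) :
    0 < μ.real {ω | a ≤ L ω} := by
  refine ENNReal.toReal_pos (fun h0 => ha.not_ge ?_) (measure_ne_top μ _)
  refine essSup_le_of_ae_le a ?_ hL.isCoboundedUnder_flip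
  filter_upwards [measure_eq_zero_iff_ae_notMem.1 h0] with ω hω
  exact (not_le.1 hω).le

theorem le_evarObjective (hint : Integrable (fun ω => exp (L ω / t)) μ) (ht : 0 < t)
    (hα : 0 < 1 - α) (hq : 1 - α ≤ μ.real {ω | a ≤ L ω}) :
    a ≤ evarObjective μ L α t := by
  have markov : exp (a / t) * μ.real {ω | a ≤ L ω} ≤ ∫ ω, exp (L ω / t) ∂μ := by
    simpa only [exp_le_exp, div_le_div_iff_of_pos_right ht] using
      mul_meas_ge_le_integral_of_nonneg (ae_of_all _ fun ω => (exp_pos _).le) hint (exp (a / t))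
  have hmass : exp (a / t) ≤ (∫ ω, exp (L ω / t) ∂μ) / (1 - α) := by
    rw [le_div_iff₀ hα]
    exact (mul_le_mul_of_nonneg_left hq (exp_pos _).le).trans markov
  have hlog : a / t ≤ log ((∫ ω, exp (L ω / t) ∂μ) / (1 - α)) :=
    (le_log_iff_exp_le ((exp_pos _).trans_le hmass)).2 hmass
  exact (div_le_iff₀' ht).1 hlog

theorem evarObjective_le [IsProbabilityMeasure μ] (hint : Integrable (fun ω => exp (L ω / t)) μ)
    (hb : ∀ᵐ ω ∂μ, L ω ≤ b) (ht : 0 < t) (hα : α < 1) :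
    evarObjective μ L α t ≤ b - t * log (1 - α) := by
  have hE : ∫ ω, exp (L ω / t) ∂μ ≤ exp (b / t) := by
    calc ∫ ω, exp (L ω / t) ∂μ ≤ ∫ _, exp (b / t) ∂μ :=
          integral_mono_ae hint (integrable_const _)
            (hb.mono fun ω hω => exp_le_exp.2 (div_le_div_of_nonneg_right hω ht.le))
      _ = exp (b / t) := by simp
  have hlog : log (∫ ω, exp (L ω / t) ∂μ) ≤ b / t :=
    (log_le_iff_le_exp (integral_exp_pos hint)).2 hE
  rw [evarObjective, log_div (integral_exp_pos hint).ne' (by linarith), mul_sub]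
  gcongr
  exact (le_div_iff₀' ht).1 hlog

theorem le_evar [IsFiniteMeasure μ] (hL : MemLp L ⊤ μ) (hα : 0 < 1 - α)
    (hq : 1 - α ≤ μ.real {ω | a ≤ L ω}) : a ≤ evar μ L α :=
  le_ciInf fun t => le_evarObjective (hL.integrable_exp_div t) t.2 hα hq

theorem evar_le [IsProbabilityMeasure μ] (hL : MemLp L ⊤ μ) (hα : 0 < 1 - α)
    (hq : 1 - α ≤ μ.real {ω | a ≤ L ω}) (hb : ∀ᵐ ω ∂μ, L ω ≤ b) : evar μ L α ≤ b := by
  have hbdd : BddBelow (Set.range fun t : Set.Ioi (0 : ℝ) => evarObjective μ L α t) :=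
    ⟨a, Set.forall_mem_range.2 fun t => le_evarObjective (hL.integrable_exp_div t) t.2 hα hq⟩
  have hlim : Tendsto (fun t => b - t * log (1 - α)) (𝓝[>] 0) (𝓝 b) := by
    refine tendsto_nhdsWithin_of_tendsto_nhds ?_
    simpa using tendsto_const_nhds.sub ((tendsto_id (x := 𝓝 (0 : ℝ))).mul_const (log (1 - α)))
  refine ge_of_tendsto hlim (eventually_mem_nhdsWithin.mono fun t (ht : 0 < t) => ?_)
  exact (ciInf_le hbdd ⟨t, ht⟩).trans
    (evarObjective_le (hL.integrable_exp_div t) hb ht (by linarith))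

theorem eventually_evar_mem_Icc [IsProbabilityMeasure μ] (hL : MemLp L ⊤ μ) {ε : ℝ}
    (hε : 0 < ε) :
    ∀ᶠ α in 𝓝[<] 1, evar μ L α ∈ Set.Icc (essSup L μ - ε) (essSup L μ) := by
  obtain ⟨C, hC⟩ := hL.exists_ae_abs_le
  have hbddAbove : IsBoundedUnder (· ≤ ·) (ae μ) L := ⟨C, hC.mono fun _ h => (abs_le.1 h).2⟩
  have hbddBelow : IsBoundedUnder (· ≥ ·) (ae μ) L := ⟨-C, hC.mono fun _ h => (abs_le.1 h).1⟩
  have hq := measureReal_setOf_le_pos_of_lt_essSup hbddBelow (sub_lt_self (essSup L μ) hε)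
  filter_upwards [Ioo_mem_nhdsLT (sub_lt_self 1 hq)] with α ⟨hqα, hα1⟩
  have hα : 0 < 1 - α := sub_pos.2 hα1
  exact ⟨le_evar hL hα (by linarith), evar_le hL hα (by linarith) (ae_le_essSup hbddAbove)⟩

end

/-- For essentially bounded `L`, `EVaR_α(L) → ess sup L` as `α → 1⁻`. -/
theorem evar_tendsto_esssup {Ω : Type*} [MeasurableSpace Ω]
    (μ : Measure Ω) [IsProbabilityMeasure μ]
    (L : Ω → ℝ) (hL : MemLp L ⊤ μ) :
    Tendsto (fun α : ℝ =>
        ⨅ t : Set.Ioi (0:ℝ),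
          (t : ℝ) * Real.log ((∫ ω, Real.exp (L ω / t) ∂μ) / (1 - α)))
      (nhdsWithin 1 (Set.Iio 1)) (nhds (essSup L μ)) := by
  change Tendsto (evar μ L) (𝓝[<] 1) (𝓝 (essSup L μ))
  refine Metric.tendsto_nhds.2 fun ε hε => ?_
  filter_upwards [eventually_evar_mem_Icc hL (half_pos hε)] with α ⟨hlow, hup⟩
  rw [Real.dist_eq, abs_lt]
  constructor <;> linarith
end

section
/- Let Σ ∈ R^{d×d} be positive definite and B_i > 0. The standard-deviation risk parity problem min { √(vᵀΣv) : v > 0, Σ_i B_i log v_i ≥ 0 } has a minimizer, and any minimizer v* satisfies v*_i (Σv*)_i / √((v*)ᵀΣv*) = λ B_i for all i, for some common λ > 0; i.e., the risk contributions of √(vᵀΣv) are proportional to the budgets B_i. -/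
/-! A continuous, absolutely homogeneous function that is positive off `0` dominates a multiple
of the norm, so `r(v) = √(vᵀΣv)` has bounded sublevel sets. Inside a ball the budget constraint
`∑ B i log v i ≥ 0` keeps every coordinate above an explicit positive bound, so the feasible set
meets the ball in a compact set, and a minimizer exists.

Positivity is an open condition, so a minimizer `v` is a local minimizer of `r` on the level set
of the log-budget through `v`. Lagrange multipliers give `B i / v i ∝ (Σv)_i / r(v)`, i.e. risk
contributions proportional to the budgets, and Euler's identity `∑ v_i (Σv)_i / r(v) = r(v) > 0`
makes the factor positive. -/

open Finset Matrix Topology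

theorem exists_pos_mul_norm_le_of_continuous_of_abs_homogeneous {E : Type*}
    [NormedAddCommGroup E] [NormedSpace ℝ E] [ProperSpace E] {f : E → ℝ} (hf : Continuous f)
    (hsmul : ∀ (c : ℝ) v, f (c • v) = |c| * f v) (hpos : ∀ v ≠ 0, 0 < f v) :
    ∃ c > 0, ∀ v, c * ‖v‖ ≤ f v := by
  have hf0 : f 0 = 0 := by simpa using hsmul 0 0
  rcases subsingleton_or_nontrivial E with hE | hE
  · exact ⟨1, one_pos, fun v => by simp [Subsingleton.elim v 0, hf0]⟩
  obtain ⟨x₀, hx₀, hmin⟩ := (isCompact_sphere (0 : E) 1).exists_isMinOn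
    (NormedSpace.sphere_nonempty.mpr zero_le_one) hf.continuousOn
  refine ⟨f x₀, hpos x₀ (ne_zero_of_mem_unit_sphere ⟨x₀, hx₀⟩), fun v => ?_⟩
  rcases eq_or_ne v 0 with rfl | hv
  · simp [hf0]
  have hnorm : ‖v‖ ≠ 0 := norm_ne_zero_iff.mpr hv
  have hsphere : ‖v‖⁻¹ • v ∈ Metric.sphere (0 : E) 1 := by
    rw [mem_sphere_zero_iff_norm, norm_smul, norm_inv, norm_norm, inv_mul_cancel₀ hnorm]
  calc f x₀ * ‖v‖ ≤ f (‖v‖⁻¹ • v) * ‖v‖ := by gcongr; exact hmin hsphere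
    _ = f v := by rw [hsmul, abs_inv, abs_norm]; field_simp

namespace Matrix

variable {ι : Type*} [Fintype ι]

theorem sum_sum_mul_mul_eq_dotProduct_mulVec {R : Type*} [NonUnitalSemiring R]
    (S : Matrix ι ι R) (v : ι → R) :
    ∑ i, ∑ j, v i * S i j * v j = v ⬝ᵥ S *ᵥ v := by
  simp only [dotProduct, mulVec, Finset.mul_sum, mul_assoc]

theorem hasStrictFDerivAt_dotProduct_mulVec (S : Matrix ι ι ℝ) (v : ι → ℝ) :
    HasStrictFDerivAt (fun w => w ⬝ᵥ S *ᵥ w)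
      (∑ k, (S *ᵥ v + v ᵥ* S) k • (ContinuousLinearMap.proj k : (ι → ℝ) →L[ℝ] ℝ))
      v := by
  have hrow : ∀ k, HasStrictFDerivAt (fun w : ι → ℝ => (S *ᵥ w) k)
      (∑ j, S k j • (ContinuousLinearMap.proj j : (ι → ℝ) →L[ℝ] ℝ)) v := fun k =>
    HasStrictFDerivAt.fun_sum fun j _ =>
      (hasStrictFDerivAt_apply (𝕜 := ℝ) j v).const_mul (S k j)
  refine (HasStrictFDerivAt.fun_sum (u := univ) fun k _ =>
    (hasStrictFDerivAt_apply k v).fun_mul (hrow k)).congr_fderiv ?_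
  ext w
  simp only [_root_.sum_apply, _root_.add_apply, _root_.smul_apply,
    ContinuousLinearMap.proj_apply, smul_eq_mul, Pi.add_apply, mulVec, vecMul, dotProduct,
    add_mul, Finset.sum_add_distrib, Finset.mul_sum, Finset.sum_mul]
  rw [add_comm]
  congr 1
  rw [Finset.sum_comm]
  simp only [mul_assoc, mul_left_comm]

end Matrix

namespace RiskParity

variable {ι : Type*} [Fintype ι]

noncomputable def logBudget (B v : ι → ℝ) : ℝ := ∑ i, B i * Real.log (v i)

def budgetSet (B : ι → ℝ) : Set (ι → ℝ) := {v | (∀ i, 0 < v i) ∧ 0 ≤ logBudget B v}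

noncomputable def sdRisk (S : Matrix ι ι ℝ) (v : ι → ℝ) : ℝ := √(v ⬝ᵥ S *ᵥ v)

noncomputable def riskContribution (S : Matrix ι ι ℝ) (v : ι → ℝ) (i : ι) : ℝ :=
  v i * (S *ᵥ v) i / sdRisk S v

section Budget

variable {B : ι → ℝ}

theorem one_mem_budgetSet : (1 : ι → ℝ) ∈ budgetSet B :=
  ⟨fun _ => one_pos, by simp [logBudget]⟩

theorem exp_le_of_mem_budgetSet [DecidableEq ι] (hB : ∀ i, 0 < B i) {v : ι → ℝ}
    (hv : v ∈ budgetSet B) {R : ℝ} (hR : ∀ j, v j ≤ R) (i : ι) :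
    Real.exp (-(∑ j ∈ univ.erase i, B j) * Real.log R / B i) ≤ v i := by
  have hrest : ∑ j ∈ univ.erase i, B j * Real.log (v j) ≤
      (∑ j ∈ univ.erase i, B j) * Real.log R := by
    rw [Finset.sum_mul]
    exact sum_le_sum fun j _ =>
      mul_le_mul_of_nonneg_left (Real.log_le_log (hv.1 j) (hR j)) (hB j).le
  have hsplit := add_sum_erase univ (fun j => B j * Real.log (v j)) (mem_univ i)
  have hbudget : 0 ≤ ∑ j, B j * Real.log (v j) := hv.2
  rw [← Real.exp_log (hv.1 i), Real.exp_le_exp, div_le_iff₀ (hB i)]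
  linarith

theorem isCompact_budgetSet_inter_closedBall (hB : ∀ i, 0 < B i) (R : ℝ) :
    IsCompact (budgetSet B ∩ Metric.closedBall 0 R) := by
  classical
  set ε : ι → ℝ := fun i => Real.exp (-(∑ j ∈ univ.erase i, B j) * Real.log R / B i)
  have hcoord : ∀ v ∈ Metric.closedBall (0 : ι → ℝ) R, ∀ j, v j ≤ R := fun v hv j =>
    (le_abs_self _).trans ((norm_le_pi_norm v j).trans (mem_closedBall_zero_iff.mp hv))
  have heq : budgetSet B ∩ Metric.closedBall 0 R =
      (Metric.closedBall 0 R ∩ {v | ∀ i, ε i ≤ v i}) ∩ logBudget B ⁻¹' Set.Ici 0 := by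
    ext v
    constructor
    · rintro ⟨hv, hvR⟩
      exact ⟨⟨hvR, exp_le_of_mem_budgetSet hB hv (hcoord v hvR)⟩, hv.2⟩
    · rintro ⟨⟨hvR, hε⟩, hlog⟩
      exact ⟨⟨fun i => (Real.exp_pos _).trans_le (hε i), hlog⟩, hvR⟩
  have hcont : ContinuousOn (logBudget B) {v | ∀ i, ε i ≤ v i} := by
    unfold logBudget
    fun_prop (disch := exact fun v hv => ((Real.exp_pos _).trans_le (hv _)).ne')
  have hclosed : IsClosed {v : ι → ℝ | ∀ i, ε i ≤ v i} := by
    rw [Set.ofPred_forall]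
    exact isClosed_iInter fun i => isClosed_le continuous_const (continuous_apply i)
  refine Metric.isCompact_of_isClosed_isBounded ?_
    (Metric.isBounded_closedBall.subset Set.inter_subset_right)
  rw [heq]
  exact (hcont.mono Set.inter_subset_right).preimage_isClosed_of_isClosed
    (Metric.isClosed_closedBall.inter hclosed) isClosed_Ici

theorem exists_isMinOn_budgetSet (hB : ∀ i, 0 < B i) {f : (ι → ℝ) → ℝ} (hf : Continuous f)
    (hbdd : Bornology.IsBounded {v | f v ≤ f 1}) :
    ∃ v ∈ budgetSet B, IsMinOn f (budgetSet B) v := by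
  obtain ⟨R, hR⟩ := hbdd.subset_closedBall 0
  have h1 : (1 : ι → ℝ) ∈ budgetSet B ∩ Metric.closedBall 0 R :=
    ⟨one_mem_budgetSet, hR (le_refl (f 1))⟩
  obtain ⟨v, ⟨hvF, -⟩, hmin⟩ :=
    (isCompact_budgetSet_inter_closedBall hB R).exists_isMinOn ⟨1, h1⟩ hf.continuousOn
  refine ⟨v, hvF, isMinOn_iff.mpr fun u hu => ?_⟩
  by_cases huR : u ∈ Metric.closedBall 0 R
  · exact isMinOn_iff.mp hmin u ⟨hu, huR⟩
  · exact (isMinOn_iff.mp hmin 1 h1).trans (not_le.mp fun h => huR (hR h)).le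

theorem isLocalMinOn_logBudget_eq {f : (ι → ℝ) → ℝ} {v : ι → ℝ} (hv : v ∈ budgetSet B)
    (hmin : IsMinOn f (budgetSet B) v) :
    IsLocalMinOn f {x | logBudget B x = logBudget B v} v := by
  have hpos : {x : ι → ℝ | ∀ i, 0 < x i} ∈ 𝓝 v := by
    rw [Set.ofPred_forall]
    exact (isOpen_iInter_of_finite fun i =>
      isOpen_lt continuous_const (continuous_apply i)).mem_nhds (Set.mem_iInter.mpr hv.1)
  filter_upwards [mem_nhdsWithin_of_mem_nhds hpos, self_mem_nhdsWithin] with x hx hlevel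
  exact hmin ⟨hx, hlevel.symm ▸ hv.2⟩

theorem hasStrictFDerivAt_logBudget (B : ι → ℝ) {v : ι → ℝ} (hv : ∀ i, v i ≠ 0) :
    HasStrictFDerivAt (logBudget B)
      (∑ i, (B i / v i) • (ContinuousLinearMap.proj i : (ι → ℝ) →L[ℝ] ℝ)) v := by
  refine (HasStrictFDerivAt.fun_sum (u := univ) fun i _ =>
    ((Real.hasStrictDerivAt_log (hv i)).comp_hasStrictFDerivAt v
      (hasStrictFDerivAt_apply (𝕜 := ℝ) i v)).const_mul (B i)).congr_fderiv ?_
  simp [smul_smul, div_eq_mul_inv]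

end Budget

section Risk

theorem continuous_sdRisk (S : Matrix ι ι ℝ) : Continuous (sdRisk S) := by
  unfold sdRisk
  fun_prop

theorem sdRisk_smul (S : Matrix ι ι ℝ) (c : ℝ) (v : ι → ℝ) :
    sdRisk S (c • v) = |c| * sdRisk S v := by
  rw [sdRisk, sdRisk, smul_dotProduct, mulVec_smul, dotProduct_smul, smul_eq_mul, smul_eq_mul,
    ← mul_assoc, ← sq, Real.sqrt_mul (sq_nonneg c), Real.sqrt_sq_eq_abs]

theorem sum_riskContribution (S : Matrix ι ι ℝ) (v : ι → ℝ) :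
    ∑ i, riskContribution S v i = sdRisk S v := by
  simp only [riskContribution, ← Finset.sum_div]
  exact Real.div_sqrt

variable {S : Matrix ι ι ℝ}

theorem sdRisk_pos (hS : S.PosDef) {v : ι → ℝ} (hv : v ≠ 0) : 0 < sdRisk S v :=
  Real.sqrt_pos.mpr (by simpa using hS.dotProduct_mulVec_pos hv)

theorem isBounded_setOf_sdRisk_le (hS : S.PosDef) (c : ℝ) :
    Bornology.IsBounded {v | sdRisk S v ≤ c} := by
  obtain ⟨m, hm, hle⟩ := exists_pos_mul_norm_le_of_continuous_of_abs_homogeneous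
    (continuous_sdRisk S) (sdRisk_smul S) fun v hv => sdRisk_pos hS hv
  refine (Metric.isBounded_closedBall (x := 0) (r := c / m)).subset fun v hv => ?_
  rw [mem_closedBall_zero_iff, le_div_iff₀ hm, mul_comm]
  exact (hle v).trans hv

variable {B : ι → ℝ}

theorem pos_of_riskContribution_eq_mul [Nonempty ι] (hS : S.PosDef) (hB : ∀ i, 0 < B i)
    {v : ι → ℝ} (hv : v ≠ 0) {lam : ℝ} (hlam : ∀ i, riskContribution S v i = lam * B i) :
    0 < lam := by
  have hsum := sum_riskContribution S v
  simp only [hlam, ← Finset.mul_sum] at hsum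
  exact pos_of_mul_pos_left (hsum ▸ sdRisk_pos hS hv)
    (sum_pos (fun i _ => hB i) univ_nonempty).le

theorem exists_riskContribution_eq_mul_of_isMinOn (hS : S.PosDef) (hB : ∀ i, 0 < B i)
    {v : ι → ℝ} (hv : v ∈ budgetSet B) (hmin : IsMinOn (sdRisk S) (budgetSet B) v) :
    ∃ lam > 0, ∀ i, riskContribution S v i = lam * B i := by
  classical
  rcases isEmpty_or_nonempty ι with hι | hι
  · exact ⟨1, one_pos, isEmptyElim⟩
  obtain ⟨i₀⟩ := id hι
  have hv0 : v ≠ 0 := fun h => (hv.1 i₀).ne' (congrFun h i₀)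
  have hq : 0 < v ⬝ᵥ S *ᵥ v := Real.sqrt_pos.mp (sdRisk_pos hS hv0)
  have hsymm : v ᵥ* S = S *ᵥ v := by
    rw [← mulVec_transpose, ← conjTranspose_eq_transpose_of_trivial, hS.isHermitian.eq]
  have hr := (Real.hasStrictDerivAt_sqrt hq.ne').comp_hasStrictFDerivAt v
    (hasStrictFDerivAt_dotProduct_mulVec S v)
  obtain ⟨a, b, hab, hlin⟩ := IsLocalExtrOn.exists_multipliers_of_hasStrictFDerivAt_1d
    (Or.inl (isLocalMinOn_logBudget_eq hv hmin))
    (hasStrictFDerivAt_logBudget B fun i => (hv.1 i).ne') hr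
  have heval : ∀ i, a * (B i / v i) + b * ((S *ᵥ v) i / sdRisk S v) = 0 := by
    intro i
    have := congrArg (fun L => L (Pi.single i 1)) hlin
    simp only [_root_.add_apply, _root_.zero_apply, _root_.smul_apply, _root_.sum_apply,
      ContinuousLinearMap.proj_apply, Pi.single_apply, smul_eq_mul, mul_ite, mul_one, mul_zero,
      sum_ite_eq', if_pos (mem_univ i), Pi.add_apply, hsymm] at this
    rw [sdRisk]
    linear_combination this
  have hb : b ≠ 0 := by
    rintro rfl
    have ha : a = 0 := by simpa [(hB i₀).ne', (hv.1 i₀).ne'] using heval i₀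
    exact hab (by simp [ha])
  have hRC : ∀ i, riskContribution S v i = -a / b * B i := by
    intro i
    have hvi := (hv.1 i).ne'
    have h := heval i
    rw [riskContribution]
    field_simp at h ⊢
    linear_combination h
  exact ⟨-a / b, pos_of_riskContribution_eq_mul hS hB hv0 hRC, hRC⟩

end Risk

end RiskParity

open RiskParity in
/-- The standard-deviation risk parity problem has a minimizer, and at any
minimizer the risk contributions are proportional to the budgets. -/
theorem sd_risk_parity (d : ℕ) (S : Matrix (Fin d) (Fin d) ℝ) (hS : S.PosDef)
    (B : Fin d → ℝ) (hB : ∀ i, 0 < B i) :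
    letI r : (Fin d → ℝ) → ℝ := fun v => Real.sqrt (∑ i, ∑ j, v i * S i j * v j)
    letI F : Set (Fin d → ℝ) := {v | (∀ i, 0 < v i) ∧ 0 ≤ ∑ i, B i * Real.log (v i)}
    (∃ v ∈ F, ∀ u ∈ F, r v ≤ r u) ∧
      ∀ vstar ∈ F, (∀ u ∈ F, r vstar ≤ r u) →
        ∃ lam : ℝ, 0 < lam ∧
          ∀ i, vstar i * S.mulVec vstar i / r vstar = lam * B i := by
  simp only [sum_sum_mul_mul_eq_dotProduct_mulVec]
  refine ⟨?_, fun v hv hmin => ?_⟩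
  · obtain ⟨v, hv, hmin⟩ :=
      exists_isMinOn_budgetSet hB (continuous_sdRisk S) (isBounded_setOf_sdRisk_le hS _)
    exact ⟨v, hv, isMinOn_iff.mp hmin⟩
  · exact exists_riskContribution_eq_mul_of_isMinOn hS hB hv (isMinOn_iff.mpr hmin)
end
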